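/- Let X, Y be compact Hausdorff spaces, E, F Banach spaces over 𝕂 ∈ {ℝ, ℂ} with F strictly convex, A a completely regular 𝕂-linear subspace of C(X,E), and B a 𝕂-linear subspace of C(Y,F). Then for any surjective (not necessarily linear) isometry T : A → B there exist a subset Y₀ of Y, a continuous surjection Φ : Y₀ → X, and a family {V_y}_{y∈Y₀} of real-linear operators from E to F with ‖V_y‖ = 1 for all y ∈ Y₀, such that Tf(y) = T0(y) + V_y(f(Φ(y))) for all f ∈ A and all y ∈ Y₀. -/

import Mathlib

/-
Subtracting `T 0` and applying the Mazur–Ulam theorem turns `T` into a real-linear isometry `S`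
of `A` into `C(Y, F)`. For `x ∈ X` and a unit vector `u`, the functions of norm one with value `u`
at `x` form a convex set; by compactness of `Y` and strict convexity of `F` there is a point `y`
at which `S` sends all of them to one and the same vector of norm one (a peak point for `(x, u)`).
Complete regularity lets one modify such a function away from `x` while raising its norm by at
most `ε`; with strict convexity this forces `S f y = 0` whenever `f x = 0`. So `S f y = V_y (f x)`
for a norm-one operator `V_y`, the point `x = Φ y` is determined by `y`, and `Φ` is continuous
because a function peaking at `x` and vanishing off a neighbourhood of `x` is sent to a function
that does not vanish near `y`.
-/

open Set Metric

variable {𝕂 : Type*} [RCLike 𝕂]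
variable {X : Type*} [TopologicalSpace X] [CompactSpace X] [T2Space X]
variable {Y : Type*} [TopologicalSpace Y] [CompactSpace Y] [T2Space Y]
variable {E : Type*} [NormedAddCommGroup E] [NormedSpace ℝ E] [NormedSpace 𝕂 E]
  [IsScalarTower ℝ 𝕂 E] [CompleteSpace E]
variable {F : Type*} [NormedAddCommGroup F] [NormedSpace ℝ F] [NormedSpace 𝕂 F]
  [IsScalarTower ℝ 𝕂 F] [CompleteSpace F]

/-- `A` is a completely regular subspace of `C(X,E)`: for each `x ∈ X`, each unit
vector `u ∈ E` and each closed set `C` not containing `x`, there is `f ∈ A` with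
`f x = u`, `‖f‖ = 1` and `f = 0` on `C`. -/
def CompletelyRegularSubspace (A : Subspace 𝕂 C(X, E)) : Prop :=
  ∀ x : X, ∀ u : E, ‖u‖ = 1 → ∀ C : Set X, IsClosed C → x ∉ C →
    ∃ f ∈ A, f x = u ∧ ‖f‖ = 1 ∧ ∀ z ∈ C, f z = 0

theorem exists_linearIsometry_of_isometry_onto {V W : Type*} [NormedAddCommGroup V]
    [NormedSpace ℝ V] [NormedAddCommGroup W] [NormedSpace ℝ W]
    (A : Submodule ℝ V) (B : Submodule ℝ W) (T : V → W)
    (hmap : ∀ f ∈ A, T f ∈ B) (hsurj : ∀ g ∈ B, ∃ f ∈ A, T f = g)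
    (hiso : ∀ f ∈ A, ∀ g ∈ A, ‖T f - T g‖ = ‖f - g‖) :
    ∃ S : A →ₗᵢ[ℝ] W, ∀ f : A, S f = T f - T 0 := by
  have hT0 : T 0 ∈ B := hmap 0 A.zero_mem
  let τ : A → B := fun f => ⟨T f - T 0, sub_mem (hmap f f.2) hT0⟩
  have hτ : Isometry τ := Isometry.of_dist_eq fun f g => by
    rw [Subtype.dist_eq, Subtype.dist_eq, dist_eq_norm, dist_eq_norm]
    show ‖(T f - T 0) - (T g - T 0)‖ = ‖(f : V) - g‖
    rw [sub_sub_sub_cancel_right]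
    exact hiso f f.2 g g.2
  have hτ_surj : Function.Surjective τ := fun g => by
    obtain ⟨f, hf, hTf⟩ := hsurj (g + T 0) (add_mem g.2 hT0)
    exact ⟨⟨f, hf⟩, Subtype.ext (by simp [τ, hTf])⟩
  let τ' : A ≃ᵢ B := { Equiv.ofBijective τ ⟨hτ.injective, hτ_surj⟩ with isometry_toFun := hτ }
  have hτ'0 : τ' 0 = 0 := Subtype.ext (sub_self (T 0))
  exact ⟨B.subtypeₗᵢ.comp (τ'.toRealLinearIsometryEquivOfMapZero hτ'0).toLinearIsometry,
    fun f => rfl⟩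

theorem eq_of_norm_midpoint_eq {V : Type*} [NormedAddCommGroup V] [NormedSpace ℝ V]
    [StrictConvexSpace ℝ V] {v w : V} {r : ℝ} (hv : ‖v‖ ≤ r) (hw : ‖w‖ ≤ r)
    (h : ‖midpoint ℝ v w‖ = r) : v = w := by
  by_contra hne
  rw [midpoint_eq_smul_add, invOf_eq_inv, smul_add] at h
  exact (norm_combo_lt_of_ne hv hw hne (by norm_num) (by norm_num) (by norm_num)).ne h

theorem ContinuousMap.exists_norm_apply_eq_norm {α V : Type*} [TopologicalSpace α]
    [CompactSpace α] [Nonempty α] [NormedAddCommGroup V] (g : C(α, V)) :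
    ∃ y, ‖g y‖ = ‖g‖ := by
  obtain ⟨y, -, hy⟩ :=
    isCompact_univ.exists_isMaxOn univ_nonempty g.continuous.norm.continuousOn
  exact ⟨y, le_antisymm (g.norm_coe_le_norm y)
    ((g.norm_le (norm_nonneg _)).2 fun z => hy (mem_univ z))⟩

theorem ContinuousMap.norm_add_le_one_add {α V : Type*} [TopologicalSpace α] [CompactSpace α]
    [NormedAddCommGroup V] {h f : C(α, V)} {ε : ℝ} (hh : ‖h‖ ≤ 1) (hf : ‖f‖ ≤ 1) (hε : 0 ≤ ε)
    (hvanish : ∀ z, ε ≤ ‖f z‖ → h z = 0) : ‖h + f‖ ≤ 1 + ε := by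
  refine (ContinuousMap.norm_le _ (by positivity)).2 fun z => ?_
  rw [ContinuousMap.add_apply]
  by_cases hz : ε ≤ ‖f z‖
  · rw [hvanish z hz, zero_add]
    linarith [f.norm_coe_le_norm z]
  · calc ‖h z + f z‖ ≤ ‖h z‖ + ‖f z‖ := norm_add_le _ _
      _ ≤ 1 + ε := add_le_add ((h.norm_coe_le_norm z).trans hh) (not_le.1 hz).le

section PeakPoints

omit [T2Space X] [T2Space Y] [CompleteSpace E] [CompleteSpace F]

theorem LinearIsometry.norm_apply_apply_le {V : Type*} [NormedAddCommGroup V]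
    [NormedSpace ℝ V] (S : V →ₗᵢ[ℝ] C(Y, F)) (f : V) (y : Y) : ‖S f y‖ ≤ ‖f‖ :=
  ((S f).norm_coe_le_norm y).trans (S.norm_map f).le

theorem LinearIsometry.apply_eq_of_norm_apply_half_add_half_eq_one [StrictConvexSpace ℝ F]
    {V : Type*} [NormedAddCommGroup V] [NormedSpace ℝ V] (S : V →ₗᵢ[ℝ] C(Y, F)) {f g : V}
    (hf : ‖f‖ ≤ 1) (hg : ‖g‖ ≤ 1) {y : Y} (h : ‖S ((2⁻¹ : ℝ) • f + (2⁻¹ : ℝ) • g) y‖ = 1) :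
    S f y = S g y ∧ ‖S f y‖ = 1 := by
  rw [map_add, map_smul, map_smul, ContinuousMap.add_apply, ContinuousMap.smul_apply,
    ContinuousMap.smul_apply, ← smul_add, ← invOf_eq_inv, ← midpoint_eq_smul_add] at h
  have heq : S f y = S g y := eq_of_norm_midpoint_eq ((S.norm_apply_apply_le f y).trans hf)
    ((S.norm_apply_apply_le g y).trans hg) h
  rw [← heq, midpoint_self] at h
  exact ⟨heq, h⟩

def peakSet (A : Submodule ℝ C(X, E)) (x : X) (e : E) : Set A :=
  {f | ‖f‖ ≤ 1 ∧ (f : C(X, E)) x = e}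

def IsPeakPoint {A : Submodule ℝ C(X, E)} (S : A →ₗᵢ[ℝ] C(Y, F)) (x : X)
    (u : sphere (0 : E) 1) (y : Y) : Prop :=
  ∀ f ∈ peakSet A x u, ‖S f y‖ = 1

variable {A : Submodule ℝ C(X, E)} {S : A →ₗᵢ[ℝ] C(Y, F)}
  {x : X} {u : sphere (0 : E) 1} {y : Y}

theorem convex_peakSet (x : X) (e : E) : Convex ℝ (peakSet A x e) := by
  intro f hf g hg a b ha hb hab
  refine ⟨?_, ?_⟩
  · calc ‖a • f + b • g‖ ≤ a * ‖f‖ + b * ‖g‖ := by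
          refine (norm_add_le _ _).trans ?_
          rw [norm_smul, norm_smul, Real.norm_of_nonneg ha, Real.norm_of_nonneg hb]
      _ ≤ a * 1 + b * 1 := by gcongr; exacts [hf.1, hg.1]
      _ = 1 := by rw [mul_one, mul_one, hab]
  · simp [hf.2, hg.2, ← add_smul, hab]

theorem norm_eq_one_of_mem_peakSet {f : A} (hf : f ∈ peakSet A x u) : ‖f‖ = 1 :=
  le_antisymm hf.1 <| by
    simpa [hf.2] using (f : C(X, E)).norm_coe_le_norm x

theorem CompletelyRegularSubspace.exists_mem_peakSet
    (hA : CompletelyRegularSubspace (𝕂 := ℝ) A) (x : X) (u : sphere (0 : E) 1) {C : Set X}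
    (hC : IsClosed C) (hxC : x ∉ C) :
    ∃ f ∈ peakSet A x u, ∀ z ∈ C, (f : C(X, E)) z = 0 := by
  obtain ⟨f, hfA, hfx, hfn, hfC⟩ := hA x u (norm_eq_of_mem_sphere u) C hC hxC
  exact ⟨⟨f, hfA⟩, ⟨hfn.le, hfx⟩, hfC⟩

theorem CompletelyRegularSubspace.exists_apply_eq_norm_eq
    (hA : CompletelyRegularSubspace (𝕂 := ℝ) A) (x : X) (e : E) :
    ∃ g : A, (g : C(X, E)) x = e ∧ ‖g‖ = ‖e‖ := by
  rcases eq_or_ne e 0 with rfl | he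
  · exact ⟨0, rfl, by simp⟩
  have hu : ‖e‖⁻¹ • e ∈ sphere (0 : E) 1 := by simp [norm_smul, he]
  obtain ⟨f, hf, -⟩ := hA.exists_mem_peakSet x ⟨_, hu⟩ isClosed_empty (notMem_empty x)
  refine ⟨‖e‖ • f, ?_, ?_⟩
  · simp [hf.2, smul_smul, he]
  · rw [norm_smul, norm_eq_one_of_mem_peakSet hf, norm_norm, mul_one]

variable [StrictConvexSpace ℝ F]

theorem half_add_half_mem_peakSet {e : E} {f g : A} (hf : f ∈ peakSet A x e)
    (hg : g ∈ peakSet A x e) : (2⁻¹ : ℝ) • f + (2⁻¹ : ℝ) • g ∈ peakSet A x e :=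
  convex_peakSet x e hf hg (by norm_num) (by norm_num) (by norm_num)

theorem IsPeakPoint.apply_eq (hp : IsPeakPoint S x u y) {f g : A} (hf : f ∈ peakSet A x u)
    (hg : g ∈ peakSet A x u) : S f y = S g y :=
  (S.apply_eq_of_norm_apply_half_add_half_eq_one hf.1 hg.1
    (hp _ (half_add_half_mem_peakSet hf hg))).1

variable (hA : CompletelyRegularSubspace (𝕂 := ℝ) A)
include hA

variable (S) in
theorem exists_isPeakPoint (x : X) (u : sphere (0 : E) 1) : ∃ y, IsPeakPoint S x u y := by
  let K : peakSet A x u → Set Y := fun f => {y | ‖S f y‖ = 1}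
  have : Nonempty (peakSet A x u) := by
    obtain ⟨f, hf, -⟩ := hA.exists_mem_peakSet x u isClosed_empty (notMem_empty x)
    exact ⟨⟨f, hf⟩⟩
  have hK_closed (f) : IsClosed (K f) := isClosed_eq (S f).continuous.norm continuous_const
  have hK_nonempty (f : peakSet A x u) : (K f).Nonempty := by
    have hSf : ‖S f‖ = 1 := (S.norm_map f).trans (norm_eq_one_of_mem_peakSet f.2)
    have : Nonempty Y := by
      by_contra! hY
      linarith [((S f).norm_le le_rfl).2 isEmptyElim]
    obtain ⟨y, hy⟩ := (S f).exists_norm_apply_eq_norm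
    exact ⟨y, hy.trans hSf⟩
  have hK_directed : Directed (· ⊇ ·) K := by
    intro f g
    -- by strict convexity, `K` of the midpoint of `f` and `g` lies in `K f ∩ K g`
    refine ⟨⟨_, half_add_half_mem_peakSet f.2 g.2⟩, fun y hy =>
      (S.apply_eq_of_norm_apply_half_add_half_eq_one f.2.1 g.2.1 hy).2, fun y hy => ?_⟩
    obtain ⟨heq, hnorm⟩ := S.apply_eq_of_norm_apply_half_add_half_eq_one f.2.1 g.2.1 hy
    show ‖S g y‖ = 1
    rwa [← heq]
  obtain ⟨y, hy⟩ := IsCompact.nonempty_iInter_of_directed_nonempty_isCompact_isClosed K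
    hK_directed hK_nonempty (fun f => (hK_closed f).isCompact) hK_closed
  exact ⟨y, fun f hf => mem_iInter.1 hy ⟨f, hf⟩⟩

theorem IsPeakPoint.norm_add_apply_le_one (hp : IsPeakPoint S x u y) {h f : A}
    (hh : h ∈ peakSet A x u) (hf : ‖f‖ ≤ 1) (hfx : (f : C(X, E)) x = 0) :
    ‖S h y + S f y‖ ≤ 1 := by
  refine le_of_forall_pos_le_add fun ε hε => ?_
  have hxC : x ∉ {z | ε ≤ ‖(f : C(X, E)) z‖} := by simpa [hfx] using hε
  obtain ⟨h', hh', hh'C⟩ := hA.exists_mem_peakSet x u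
    (isClosed_le continuous_const (f : C(X, E)).continuous.norm) hxC
  calc ‖S h y + S f y‖ = ‖S (h' + f) y‖ := by
        rw [map_add, ContinuousMap.add_apply, hp.apply_eq hh' hh]
    _ ≤ ‖h' + f‖ := S.norm_apply_apply_le _ y
    _ ≤ 1 + ε := ContinuousMap.norm_add_le_one_add hh'.1 hf hε.le hh'C

theorem IsPeakPoint.apply_eq_zero (hp : IsPeakPoint S x u y) {f : A}
    (hfx : (f : C(X, E)) x = 0) : S f y = 0 := by
  obtain ⟨h, hh, -⟩ := hA.exists_mem_peakSet x u isClosed_empty (notMem_empty x)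
  set c : ℝ := (1 + ‖f‖)⁻¹
  have hc : 0 < c := by positivity
  have hcf : ‖c • f‖ ≤ 1 := by
    rw [norm_smul, Real.norm_of_nonneg hc.le, inv_mul_le_iff₀ (by positivity)]
    linarith
  set v := S h y
  set w := S (c • f) y with hw_def
  have hplus : ‖v + w‖ ≤ 1 := hp.norm_add_apply_le_one hA hh hcf (by simp [hfx])
  have hminus : ‖v + -w‖ ≤ 1 := by
    simpa [w] using hp.norm_add_apply_le_one hA hh (f := -(c • f)) (by rwa [norm_neg])
      (by simp [hfx])
  have hmid : midpoint ℝ (v + w) (v + -w) = v := by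
    rw [midpoint_eq_smul_add, invOf_eq_inv]
    module
  have hw : w = -w :=
    add_left_cancel <| eq_of_norm_midpoint_eq hplus hminus (by rw [hmid]; exact hp h hh)
  have : IsAddTorsionFree F := .of_isTorsionFree ℝ F
  rw [self_eq_neg, hw_def, map_smul, ContinuousMap.smul_apply, smul_eq_zero] at hw
  exact hw.resolve_left hc.ne'

theorem IsPeakPoint.apply_eq_of_apply_eq (hp : IsPeakPoint S x u y) {f g : A}
    (hfg : (f : C(X, E)) x = (g : C(X, E)) x) : S f y = S g y := by
  have := hp.apply_eq_zero hA (f := f - g) (by simp [hfg])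
  rwa [map_sub, ContinuousMap.sub_apply, sub_eq_zero] at this

theorem IsPeakPoint.unique [T1Space X] (hp : IsPeakPoint S x u y) {x' : X}
    {u' : sphere (0 : E) 1} (hp' : IsPeakPoint S x' u' y) : x = x' := by
  by_contra hne
  obtain ⟨f, hf, hfx'⟩ := hA.exists_mem_peakSet x u isClosed_singleton hne
  have h1 := hp f hf
  rw [hp'.apply_eq_zero hA (hfx' x' rfl), norm_zero] at h1
  exact zero_ne_one h1

theorem IsPeakPoint.exists_continuousLinearMap (hp : IsPeakPoint S x u y) :
    ∃ V : E →L[ℝ] F, ‖V‖ = 1 ∧ ∀ f : A, S f y = V ((f : C(X, E)) x) := by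
  choose g hgx hgn using hA.exists_apply_eq_norm_eq x
  have hdep (f : A) : S f y = S (g ((f : C(X, E)) x)) y :=
    hp.apply_eq_of_apply_eq hA (hgx _).symm
  let V₀ : E →ₗ[ℝ] F :=
    { toFun := fun e => S (g e) y
      map_add' := fun e e' => by
        rw [hp.apply_eq_of_apply_eq hA (g := g e + g e') (by simp [hgx]), map_add]
        rfl
      map_smul' := fun r e => by
        rw [hp.apply_eq_of_apply_eq hA (g := r • g e) (by simp [hgx]), map_smul]
        rfl }
  let V := V₀.mkContinuous 1 fun e => by
    rw [one_mul, ← hgn e]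
    exact S.norm_apply_apply_le _ y
  refine ⟨V, le_antisymm (LinearMap.mkContinuous_norm_le _ zero_le_one _) ?_, hdep⟩
  obtain ⟨f, hf, -⟩ := hA.exists_mem_peakSet x u isClosed_empty (notMem_empty x)
  have hVu : ‖V u‖ = 1 := by
    rw [← hf.2, ← hp f hf, hdep f]
    rfl
  simpa [hVu] using V.le_opNorm u

theorem continuous_of_isPeakPoint {Y₀ : Set Y} {Φ : Y₀ → X}
    (hpeak : ∀ y : Y₀, ∃ u, IsPeakPoint S (Φ y) u y) : Continuous Φ := by
  refine continuous_iff_continuousAt.2 fun y => tendsto_nhds.2 fun U hU hyU => ?_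
  obtain ⟨u, hp⟩ := hpeak y
  obtain ⟨f, hf, hfU⟩ := hA.exists_mem_peakSet (Φ y) u hU.isClosed_compl (not_not_intro hyU)
  have hne : S f y ≠ 0 := fun h => by simpa [h] using hp f hf
  filter_upwards [((S f).continuous.comp continuous_subtype_val).continuousAt.eventually_ne hne]
    with y' hy'
  by_contra hΦ
  obtain ⟨u', hp'⟩ := hpeak y'
  exact hy' (hp'.apply_eq_zero hA (hfU _ hΦ))

variable (S) in
theorem exists_weighted_composition [T1Space X] [Nontrivial E] :
    ∃ (Y₀ : Set Y) (Φ : Y₀ → X) (V : Y₀ → E →L[ℝ] F),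
      Continuous Φ ∧ Function.Surjective Φ ∧ (∀ y, ‖V y‖ = 1) ∧
      ∀ (f : A) (y : Y₀), S f y = V y ((f : C(X, E)) (Φ y)) := by
  let Y₀ : Set Y := {y | ∃ x u, IsPeakPoint S x u y}
  choose Φ u hp using fun y : Y₀ => y.2
  choose V hV hrep using fun y : Y₀ => (hp y).exists_continuousLinearMap hA
  obtain ⟨u₀, hu₀⟩ := (NormedSpace.sphere_nonempty (x := (0 : E)) (r := 1)).2 zero_le_one
  refine ⟨Y₀, Φ, V, continuous_of_isPeakPoint hA fun y => ⟨u y, hp y⟩, fun x => ?_, hV,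
    fun f y => hrep y f⟩
  obtain ⟨y, hy⟩ := exists_isPeakPoint S hA x ⟨u₀, hu₀⟩
  exact ⟨⟨y, x, _, hy⟩, (hp _).unique hA hy⟩

end PeakPoints

/-- Generalization of Cambern's result: if `A` is completely regular and `F` is
strictly convex, then any surjective isometry `T : A → B` is represented on a
subset `Y₀ ⊆ Y` via a continuous surjection `Φ : Y₀ → X` and norm-one
real-linear operators `V_y : E → F`. -/
theorem stmt17 [Nontrivial E] [StrictConvexSpace ℝ F]
    (A : Subspace 𝕂 C(X, E)) (hA : CompletelyRegularSubspace A)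
    (B : Subspace 𝕂 C(Y, F))
    (T : C(X, E) → C(Y, F))
    (hmap : ∀ f ∈ A, T f ∈ B)
    (hsurj : ∀ g ∈ B, ∃ f ∈ A, T f = g)
    (hiso : ∀ f ∈ A, ∀ g ∈ A, ‖T f - T g‖ = ‖f - g‖) :
    ∃ (Y₀ : Set Y) (Φ : Y₀ → X) (V : Y₀ → (E →L[ℝ] F)),
      Continuous Φ ∧
      (∀ x : X, ∃ y : Y₀, Φ y = x) ∧
      (∀ y : Y₀, ‖V y‖ = 1) ∧
      (∀ f ∈ A, ∀ y : Y₀, T f (y : Y) = T 0 (y : Y) + V y (f (Φ y))) := by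
  obtain ⟨S, hS⟩ := exists_linearIsometry_of_isometry_onto (A.restrictScalars ℝ)
    (B.restrictScalars ℝ) T hmap hsurj hiso
  obtain ⟨Y₀, Φ, V, hΦ, hΦ_surj, hV, hrep⟩ := exists_weighted_composition S hA
  refine ⟨Y₀, Φ, V, hΦ, hΦ_surj, hV, fun f hf y => ?_⟩
  have hfy := hrep ⟨f, hf⟩ y
  rw [hS, ContinuousMap.sub_apply] at hfy
  exact eq_add_of_sub_eq' hfy
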